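/- arXiv:2212.06450 — 6 statements merged into one kernel-verified Lean document; each statement's English description precedes it below -/
import Mathlib

section
/- Let 𝒜 be the free ℝ-module with basis {e_σ}_{σ∈Ω} and product defined by e_σ · e_η = Σ_{ζ∈Ω_{ση}} c_{ση,ζ} e_ζ when 𝔇_{ση} is finite (with c_{ση,ζ} > 0 and Σ = 1) and 0 otherwise. Then for every η ∈ Ω, the ideal generated by e_η equals the submodule F^η spanned by {e_σ : σ ∈ E^η}; in particular e_η · 𝒜 = F^η. -/
/-!
Left multiplication by `e_η` sends `e_σ`, for `σ` in `E^η`, to a positive combination of the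
crossovers `ζ ∈ Ω_{ησ}`, each of which differs from `η` on a subset of `𝔇_{ησ}`; all of them
except `ζ = σ` differ on a strictly smaller set. Hence the image lies in `F^η`, and the matrix of
`e_η · _` on `F^η` is triangular with nonzero diagonal with respect to `|𝔇_{ησ}|`, so by
induction every `e_σ` with `σ ∈ E^η` is in the image.
-/

open Submodule Finsupp

theorem Submodule.mem_of_forall_mem_sup_span_lt {R M ι : Type*} [Semiring R] [AddCommMonoid M]
    [Module R M] {p : Submodule R M} {v : ι → M} {P : ι → Prop} (r : ι → ℕ)
    (h : ∀ i, P i → v i ∈ p ⊔ span R (v '' {j | P j ∧ r j < r i})) {i : ι} (hi : P i) :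
    v i ∈ p := by
  induction hn : r i using Nat.strong_induction_on generalizing i with
  | _ n ih =>
    refine (sup_le le_rfl (span_le.2 ?_) : p ⊔ _ ≤ p) (h i hi)
    rintro _ ⟨j, ⟨hj, hlt⟩, rfl⟩
    exact ih _ (hn ▸ hlt) hj rfl

theorem Submodule.mem_span_singleton_sum_sup_span_erase {K M ι : Type*} [DivisionRing K]
    [AddCommGroup M] [Module K M] [DecidableEq ι] (v : ι → M) {c : ι → K} {t : Finset ι} {i : ι}
    (hi : i ∈ t) (hc : c i ≠ 0) : v i ∈ (K ∙ ∑ j ∈ t, c j • v j) ⊔ span K (v '' ↑(t.erase i)) := by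
  have hsplit : c i • v i = ∑ j ∈ t, c j • v j - ∑ j ∈ t.erase i, c j • v j := by
    rw [← Finset.add_sum_erase t _ hi, add_sub_cancel_right]
  rw [← inv_smul_smul₀ hc (v i), hsplit]
  refine smul_mem _ _ (sub_mem (mem_sup_left (mem_span_singleton_self _)) (mem_sup_right ?_))
  exact sum_mem fun j hj => smul_mem _ _ (subset_span (Set.mem_image_of_mem v hj))

namespace GeneticGibbs

variable {S 𝕃 : Type*}

/-- The paper's `Ω_{ση}`. -/
def crossovers (𝒞 : Set (Set 𝕃)) (σ η : 𝕃 → S) : Set (𝕃 → S) :=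
  {ζ | ∀ Δ ∈ 𝒞, Set.EqOn ζ σ Δ ∨ Set.EqOn ζ η Δ}

variable {𝒞 : Set (Set 𝕃)} {σ η ζ : 𝕃 → S}

theorem right_mem_crossovers : η ∈ crossovers 𝒞 σ η :=
  fun _ _ => Or.inr (Set.eqOn_refl _ _)

theorem eq_or_eq_of_mem_crossovers (h𝒞 : ⋃₀ 𝒞 = Set.univ) (hζ : ζ ∈ crossovers 𝒞 σ η)
    (x : 𝕃) : ζ x = σ x ∨ ζ x = η x := by
  obtain ⟨Δ, hΔ, hx⟩ := Set.sUnion_eq_univ_iff.1 h𝒞 x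
  exact (hζ Δ hΔ).imp (· hx) (· hx)

theorem crossovers_finite (h𝒞 : ⋃₀ 𝒞 = Set.univ) (hD : {x | σ x ≠ η x}.Finite) :
    (crossovers 𝒞 σ η).Finite := by
  classical
  -- A crossover is determined by the set where it leaves `σ`, which lies inside `𝔇_{ση}`.
  refine (hD.finite_subsets.image fun T x => if x ∈ T then η x else σ x).subset ?_
  intro ζ hζ
  refine ⟨{x | ζ x ≠ σ x}, fun x hx => ?_, funext fun x => ?_⟩
  · rcases eq_or_eq_of_mem_crossovers h𝒞 hζ x with h | h
    · exact absurd h hx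
    · exact fun e => hx (h.trans e.symm)
  · by_cases hx : ζ x = σ x
    · simp [hx]
    · simpa [hx] using ((eq_or_eq_of_mem_crossovers h𝒞 hζ x).resolve_left hx).symm

theorem setOf_ne_subset_of_mem_crossovers (h𝒞 : ⋃₀ 𝒞 = Set.univ) (hζ : ζ ∈ crossovers 𝒞 η σ) :
    {x | η x ≠ ζ x} ⊆ {x | η x ≠ σ x} := fun x hx e =>
  hx (e.trans ((eq_or_eq_of_mem_crossovers h𝒞 hζ x).resolve_left (Ne.symm hx)).symm)

theorem setOf_ne_ssubset_of_mem_crossovers (h𝒞 : ⋃₀ 𝒞 = Set.univ) (hζ : ζ ∈ crossovers 𝒞 η σ)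
    (hne : ζ ≠ σ) : {x | η x ≠ ζ x} ⊂ {x | η x ≠ σ x} := by
  obtain ⟨x, hx⟩ := Function.ne_iff.1 hne
  have hxη : ζ x = η x := (eq_or_eq_of_mem_crossovers h𝒞 hζ x).resolve_right hx
  refine (Set.ssubset_iff_of_subset (setOf_ne_subset_of_mem_crossovers h𝒞 hζ)).2
    ⟨x, fun e => hx (hxη.trans e), fun h => h hxη.symm⟩

/-- The paper's `F^η`. -/
noncomputable def fertile (K : Type*) [Semiring K] (η : 𝕃 → S) : Submodule K ((𝕃 → S) →₀ K) :=
  span K {f | ∃ σ : 𝕃 → S, {x | σ x ≠ η x}.Finite ∧ f = single σ 1}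

theorem range_le_fertile {K : Type*} [Semiring K] {A : ((𝕃 → S) →₀ K) →ₗ[K] ((𝕃 → S) →₀ K)}
    {c : (𝕃 → S) → (𝕃 → S) → K} (h𝒞 : ⋃₀ 𝒞 = Set.univ)
    (hA : ∀ σ, {x | η x ≠ σ x}.Finite →
      A (single σ 1) = ∑ᶠ ζ ∈ crossovers 𝒞 η σ, c σ ζ • single ζ 1)
    (hA0 : ∀ σ, ¬ {x | η x ≠ σ x}.Finite → A (single σ 1) = 0) :
    LinearMap.range A ≤ fertile K η := by
  rw [LinearMap.range_eq_map, ← Finsupp.basisSingleOne.span_eq, map_span_le]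
  rintro _ ⟨σ, rfl⟩
  by_cases hσ : {x | η x ≠ σ x}.Finite
  · have hfin := crossovers_finite h𝒞 hσ
    rw [coe_basisSingleOne, hA σ hσ, finsum_mem_eq_finite_toFinset_sum _ hfin]
    refine sum_mem fun ζ hζ => smul_mem _ _ (subset_span ⟨ζ, ?_, rfl⟩)
    have hζ_fin := hσ.subset (setOf_ne_subset_of_mem_crossovers h𝒞 (hfin.mem_toFinset.1 hζ))
    simpa [ne_comm] using hζ_fin
  · rw [coe_basisSingleOne, hA0 σ hσ]
    exact zero_mem _

theorem fertile_le_range {K : Type*} [Field K] {A : ((𝕃 → S) →₀ K) →ₗ[K] ((𝕃 → S) →₀ K)}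
    {c : (𝕃 → S) → (𝕃 → S) → K} (h𝒞 : ⋃₀ 𝒞 = Set.univ)
    (hA : ∀ σ, {x | η x ≠ σ x}.Finite →
      A (single σ 1) = ∑ᶠ ζ ∈ crossovers 𝒞 η σ, c σ ζ • single ζ 1)
    (hc : ∀ σ, {x | η x ≠ σ x}.Finite → c σ σ ≠ 0) :
    fertile K η ≤ LinearMap.range A := by
  classical
  refine span_le.2 ?_
  rintro _ ⟨σ, hσ, rfl⟩
  refine mem_of_forall_mem_sup_span_lt (v := fun σ => single σ (1 : K))
    (P := fun σ => {x | η x ≠ σ x}.Finite) (fun σ => {x | η x ≠ σ x}.ncard) (fun σ hσ => ?_)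
    (by simpa [ne_comm] using hσ)
  have hfin := crossovers_finite h𝒞 hσ
  have hsplit := mem_span_singleton_sum_sup_span_erase (fun ζ => single ζ (1 : K)) (c := c σ)
    (hfin.mem_toFinset.2 right_mem_crossovers) (hc σ hσ)
  rw [← finsum_mem_eq_finite_toFinset_sum _ hfin, ← hA σ hσ] at hsplit
  have hleading : (K ∙ A (single σ 1)) ≤ LinearMap.range A := by simp
  have hlower : (↑(hfin.toFinset.erase σ) : Set (𝕃 → S)) ⊆
      {ζ | {x | η x ≠ ζ x}.Finite ∧ {x | η x ≠ ζ x}.ncard < {x | η x ≠ σ x}.ncard} := by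
    intro ζ hζ
    obtain ⟨hne, hmem⟩ := Finset.mem_erase.1 hζ
    have hss := setOf_ne_ssubset_of_mem_crossovers h𝒞 (hfin.mem_toFinset.1 hmem) hne
    exact ⟨hσ.subset hss.subset, Set.ncard_lt_ncard hss hσ⟩
  exact sup_le_sup hleading (span_mono (Set.image_mono hlower)) hsplit

end GeneticGibbs

theorem genetic_gibbs_fertile_ideal_general {S 𝕃 : Type*}
    (𝒞 : Set (Set 𝕃)) (hpart : Setoid.IsPartition 𝒞)
    (c : (𝕃 → S) → (𝕃 → S) → (𝕃 → S) → ℝ)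
    (mul : ((𝕃 → S) →₀ ℝ) →ₗ[ℝ] ((𝕃 → S) →₀ ℝ) →ₗ[ℝ] ((𝕃 → S) →₀ ℝ))
    (hpos : ∀ σ η ζ : 𝕃 → S, ({x : 𝕃 | σ x ≠ η x}).Finite →
      ζ ∈ {ζ : 𝕃 → S | ∀ Δ ∈ 𝒞, Set.EqOn ζ σ Δ ∨ Set.EqOn ζ η Δ} → 0 < c σ η ζ)
    (hmul : ∀ σ η : 𝕃 → S, ({x : 𝕃 | σ x ≠ η x}).Finite →
      mul (Finsupp.single σ 1) (Finsupp.single η 1)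
        = ∑ᶠ ζ ∈ {ζ : 𝕃 → S | ∀ Δ ∈ 𝒞, Set.EqOn ζ σ Δ ∨ Set.EqOn ζ η Δ},
            c σ η ζ • Finsupp.single ζ (1 : ℝ))
    (hmul0 : ∀ σ η : 𝕃 → S, ¬ ({x : 𝕃 | σ x ≠ η x}).Finite →
      mul (Finsupp.single σ 1) (Finsupp.single η 1) = 0)
    (η : 𝕃 → S) :
    LinearMap.range (mul (Finsupp.single η 1))
      = Submodule.span ℝ {f : (𝕃 → S) →₀ ℝ |
          ∃ σ : 𝕃 → S, ({x : 𝕃 | σ x ≠ η x}).Finite ∧ f = Finsupp.single σ 1} := by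
  have h𝒞 := hpart.sUnion_eq_univ
  exact le_antisymm (GeneticGibbs.range_le_fertile h𝒞 (hmul η) (hmul0 η))
    (GeneticGibbs.fertile_le_range h𝒞 (hmul η) fun σ hσ =>
      (hpos η σ σ hσ GeneticGibbs.right_mem_crossovers).ne')

/-- In the 𝒞-genetic Gibbs algebra (free ℝ-module on {e_σ}_{σ∈Ω} with
e_σ·e_η = Σ_{ζ∈Ω_{ση}} c_{ση,ζ} e_ζ when 𝔇_{ση} is finite and 0 otherwise),
the ideal e_η·𝒜 equals the fertile ideal F^η = span{e_σ : σ ∈ E^η}. -/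
theorem genetic_gibbs_fertile_ideal {S 𝕃 : Type*} [Finite S] [Countable 𝕃]
    (𝒞 : Set (Set 𝕃)) (hpart : Setoid.IsPartition 𝒞)
    (c : (𝕃 → S) → (𝕃 → S) → (𝕃 → S) → ℝ)
    (mul : ((𝕃 → S) →₀ ℝ) →ₗ[ℝ] ((𝕃 → S) →₀ ℝ) →ₗ[ℝ] ((𝕃 → S) →₀ ℝ))
    (hpos : ∀ σ η ζ : 𝕃 → S, ({x : 𝕃 | σ x ≠ η x}).Finite →
      ζ ∈ {ζ : 𝕃 → S | ∀ Δ ∈ 𝒞, Set.EqOn ζ σ Δ ∨ Set.EqOn ζ η Δ} → 0 < c σ η ζ)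
    (hsum : ∀ σ η : 𝕃 → S, ({x : 𝕃 | σ x ≠ η x}).Finite →
      ∑ᶠ ζ ∈ {ζ : 𝕃 → S | ∀ Δ ∈ 𝒞, Set.EqOn ζ σ Δ ∨ Set.EqOn ζ η Δ}, c σ η ζ = 1)
    (hmul : ∀ σ η : 𝕃 → S, ({x : 𝕃 | σ x ≠ η x}).Finite →
      mul (Finsupp.single σ 1) (Finsupp.single η 1)
        = ∑ᶠ ζ ∈ {ζ : 𝕃 → S | ∀ Δ ∈ 𝒞, Set.EqOn ζ σ Δ ∨ Set.EqOn ζ η Δ},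
            c σ η ζ • Finsupp.single ζ (1 : ℝ))
    (hmul0 : ∀ σ η : 𝕃 → S, ¬ ({x : 𝕃 | σ x ≠ η x}).Finite →
      mul (Finsupp.single σ 1) (Finsupp.single η 1) = 0)
    (η : 𝕃 → S) :
    LinearMap.range (mul (Finsupp.single η 1))
      = Submodule.span ℝ {f : (𝕃 → S) →₀ ℝ |
          ∃ σ : 𝕃 → S, ({x : 𝕃 | σ x ≠ η x}).Finite ∧ f = Finsupp.single σ 1} :=
  genetic_gibbs_fertile_ideal_general 𝒞 hpart c mul hpos hmul hmul0 η
end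

section
/- Every nonzero multiplicative linear functional φ : 𝒜 → ℝ of the 𝒞-genetic Gibbs algebra satisfies: φ(e_σ) ∈ {0,1} for every σ, and the set {σ : φ(e_σ) = 1} is exactly one fertile class E^η. Consequently hom(𝒜, ℝ) = {π_F : F ∈ ℱ_Ω ∪ {0}} where π_{F^η}(e_σ) = 1 if σ ∈ E^η and 0 otherwise. -/
/-!
Idempotency of the basis vectors forces `φ (e σ) ∈ {0, 1}`, and `φ ≠ 0` gives some `η` with
`φ (e η) = 1`. If `σ` differs from `η` at infinitely many sites then `e σ * e η = 0`, so
`φ (e σ) = 0`. If it differs at finitely many, `e σ * e η` is a finite combination of the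
recombinations `e ζ` with positive coefficients, one of them being `e η` itself; applying `φ`,
the right-hand side is positive, so `φ (e σ) = 1`.
-/

open Finsupp

/-- The paper's `Ω_{ση}`. -/
def recombinations {S 𝕃 : Type*} (𝒞 : Set (Set 𝕃)) (σ η : 𝕃 → S) : Set (𝕃 → S) :=
  {ζ | ∀ Δ ∈ 𝒞, Set.EqOn ζ σ Δ ∨ Set.EqOn ζ η Δ}

section Recombinations

variable {S 𝕃 : Type*} {𝒞 : Set (Set 𝕃)}

theorem right_mem_recombinations (σ η : 𝕃 → S) : η ∈ recombinations 𝒞 σ η :=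
  fun _ _ => Or.inr fun _ _ => rfl

theorem apply_eq_left_of_mem_recombinations (h𝒞 : ⋃₀ 𝒞 = Set.univ) {σ η ζ : 𝕃 → S}
    (hζ : ζ ∈ recombinations 𝒞 σ η) {x : 𝕃} (hx : σ x = η x) : ζ x = σ x := by
  obtain ⟨Δ, hΔ, hxΔ⟩ := Set.sUnion_eq_univ_iff.1 h𝒞 x
  rcases hζ Δ hΔ with h | h
  · exact h hxΔ
  · rw [h hxΔ, hx]

/-- A recombination is determined by its values on the finite set where `σ` and `η` differ. -/
theorem finite_recombinations [Finite S] (h𝒞 : ⋃₀ 𝒞 = Set.univ) {σ η : 𝕃 → S}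
    (hD : {x | σ x ≠ η x}.Finite) : (recombinations 𝒞 σ η).Finite := by
  classical
  have := hD.to_subtype
  refine (Set.finite_range fun f : {x | σ x ≠ η x} → S =>
    fun x => if h : σ x ≠ η x then f ⟨x, h⟩ else σ x).subset fun ζ hζ => ⟨fun x => ζ x, ?_⟩
  funext x
  by_cases h : σ x ≠ η x
  · simp [h]
  · simp [h, apply_eq_left_of_mem_recombinations h𝒞 hζ (not_not.1 h)]

end Recombinations

theorem finsum_mem_pos_of_mem {α : Type*} {s : Set α} {f : α → ℝ} {a : α} (hs : s.Finite)
    (hf : ∀ i ∈ s, 0 ≤ f i) (ha : a ∈ s) (hfa : 0 < f a) : 0 < ∑ᶠ i ∈ s, f i := by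
  rw [finsum_mem_eq_finite_toFinset_sum f hs]
  exact Finset.sum_pos' (fun i hi => hf i (hs.mem_toFinset.1 hi)) ⟨a, hs.mem_toFinset.2 ha, hfa⟩

theorem map_eq_zero_or_eq_one_of_mul_self {M G₀ : Type*} [MonoidWithZero G₀]
    [IsLeftCancelMulZero G₀] {mul : M → M → M} {φ : M → G₀}
    (hφ : ∀ u v, φ (mul u v) = φ u * φ v) {u : M} (hu : mul u u = u) : φ u = 0 ∨ φ u = 1 :=
  IsIdempotentElem.iff_eq_zero_or_one.1 (by rw [IsIdempotentElem, ← hφ, hu])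

theorem Finsupp.exists_map_single_one_ne_zero {α R M : Type*} [Semiring R] [AddCommMonoid M]
    [Module R M] {φ : (α →₀ R) →ₗ[R] M} (hφ : φ ≠ 0) : ∃ a, φ (single a 1) ≠ 0 := by
  by_contra! h
  exact hφ (Finsupp.basisSingleOne.ext fun a => by simpa using h a)

theorem map_single_eq_one_of_finite_diff {S 𝕃 : Type*} [Finite S] {𝒞 : Set (Set 𝕃)}
    (h𝒞 : ⋃₀ 𝒞 = Set.univ) {c : (𝕃 → S) → (𝕃 → S) → (𝕃 → S) → ℝ}
    {mul : ((𝕃 → S) →₀ ℝ) →ₗ[ℝ] ((𝕃 → S) →₀ ℝ) →ₗ[ℝ] ((𝕃 → S) →₀ ℝ)}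
    {φ : ((𝕃 → S) →₀ ℝ) →ₗ[ℝ] ℝ}
    (hpos : ∀ σ η ζ, {x | σ x ≠ η x}.Finite → ζ ∈ recombinations 𝒞 σ η → 0 < c σ η ζ)
    (hmul : ∀ σ η, {x | σ x ≠ η x}.Finite →
      mul (single σ 1) (single η 1) = ∑ᶠ ζ ∈ recombinations 𝒞 σ η, c σ η ζ • single ζ 1)
    (hφmul : ∀ u v, φ (mul u v) = φ u * φ v)
    (h01 : ∀ σ, φ (single σ 1) = 0 ∨ φ (single σ 1) = 1)
    {σ η : 𝕃 → S} (hD : {x | σ x ≠ η x}.Finite) (hη : φ (single η 1) = 1) :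
    φ (single σ 1) = 1 := by
  have hs := finite_recombinations h𝒞 hD
  have hprod : φ (single σ 1) * φ (single η 1)
      = ∑ᶠ ζ ∈ recombinations 𝒞 σ η, c σ η ζ * φ (single ζ 1) := by
    rw [← hφmul, hmul σ η hD]
    simpa only [LinearMap.toAddMonoidHom_coe, map_smul, smul_eq_mul] using
      φ.toAddMonoidHom.map_finsum_mem (fun ζ => c σ η ζ • single ζ 1) hs
  have hsum_pos : 0 < ∑ᶠ ζ ∈ recombinations 𝒞 σ η, c σ η ζ * φ (single ζ 1) :=
    finsum_mem_pos_of_mem hs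
      (fun ζ hζ => mul_nonneg (hpos σ η ζ hD hζ).le (by rcases h01 ζ with h | h <;> simp [h]))
      (right_mem_recombinations σ η)
      (by rw [hη, mul_one]; exact hpos σ η η hD (right_mem_recombinations σ η))
  refine (h01 σ).resolve_left fun h0 => ?_
  rw [h0, zero_mul] at hprod
  exact hsum_pos.ne hprod

theorem genetic_gibbs_multiplicative_functionals_general {S 𝕃 : Type*} [Finite S]
    (𝒞 : Set (Set 𝕃)) (hpart : Setoid.IsPartition 𝒞)
    (c : (𝕃 → S) → (𝕃 → S) → (𝕃 → S) → ℝ)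
    (mul : ((𝕃 → S) →₀ ℝ) →ₗ[ℝ] ((𝕃 → S) →₀ ℝ) →ₗ[ℝ] ((𝕃 → S) →₀ ℝ))
    (hpos : ∀ σ η ζ : 𝕃 → S, ({x : 𝕃 | σ x ≠ η x}).Finite →
      ζ ∈ {ζ : 𝕃 → S | ∀ Δ ∈ 𝒞, Set.EqOn ζ σ Δ ∨ Set.EqOn ζ η Δ} → 0 < c σ η ζ)
    (hmul : ∀ σ η : 𝕃 → S, ({x : 𝕃 | σ x ≠ η x}).Finite →
      mul (Finsupp.single σ 1) (Finsupp.single η 1)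
        = ∑ᶠ ζ ∈ {ζ : 𝕃 → S | ∀ Δ ∈ 𝒞, Set.EqOn ζ σ Δ ∨ Set.EqOn ζ η Δ},
            c σ η ζ • Finsupp.single ζ (1 : ℝ))
    (hmul0 : ∀ σ η : 𝕃 → S, ¬ ({x : 𝕃 | σ x ≠ η x}).Finite →
      mul (Finsupp.single σ 1) (Finsupp.single η 1) = 0)
    (hidem : ∀ σ : 𝕃 → S,
      mul (Finsupp.single σ 1) (Finsupp.single σ 1) = Finsupp.single σ 1)
    (φ : ((𝕃 → S) →₀ ℝ) →ₗ[ℝ] ℝ)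
    (hφmul : ∀ u v, φ (mul u v) = φ u * φ v) (hφ0 : φ ≠ 0) :
    (∀ σ : 𝕃 → S, φ (Finsupp.single σ 1) = 0 ∨ φ (Finsupp.single σ 1) = 1) ∧
      ∃ η : 𝕃 → S, {σ : 𝕃 → S | φ (Finsupp.single σ 1) = 1}
        = {σ : 𝕃 → S | ({x : 𝕃 | σ x ≠ η x}).Finite} := by
  have h01 : ∀ σ, φ (single σ 1) = 0 ∨ φ (single σ 1) = 1 :=
    fun σ => map_eq_zero_or_eq_one_of_mul_self hφmul (hidem σ)
  obtain ⟨η, hη⟩ : ∃ η, φ (single η 1) = 1 := by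
    obtain ⟨η, hη⟩ := Finsupp.exists_map_single_one_ne_zero hφ0
    exact ⟨η, (h01 η).resolve_left hη⟩
  refine ⟨h01, η, Set.ext fun σ => ⟨fun (hσ : φ (single σ 1) = 1) => ?_, fun hD => ?_⟩⟩
  · by_contra hD
    simpa [hmul0 σ η hD, hσ, hη] using hφmul (single σ 1) (single η 1)
  · exact map_single_eq_one_of_finite_diff hpart.sUnion_eq_univ hpos hmul hφmul h01 hD hη

/-- Every nonzero multiplicative linear functional φ : 𝒜 → ℝ of the
𝒞-genetic Gibbs algebra takes values in {0,1} on the basis, and the set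
where it is 1 is exactly one fertile class E^η. -/
theorem genetic_gibbs_multiplicative_functionals {S 𝕃 : Type*} [Finite S] [Countable 𝕃]
    (𝒞 : Set (Set 𝕃)) (hpart : Setoid.IsPartition 𝒞)
    (c : (𝕃 → S) → (𝕃 → S) → (𝕃 → S) → ℝ)
    (mul : ((𝕃 → S) →₀ ℝ) →ₗ[ℝ] ((𝕃 → S) →₀ ℝ) →ₗ[ℝ] ((𝕃 → S) →₀ ℝ))
    (hpos : ∀ σ η ζ : 𝕃 → S, ({x : 𝕃 | σ x ≠ η x}).Finite →
      ζ ∈ {ζ : 𝕃 → S | ∀ Δ ∈ 𝒞, Set.EqOn ζ σ Δ ∨ Set.EqOn ζ η Δ} → 0 < c σ η ζ)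
    (hsum : ∀ σ η : 𝕃 → S, ({x : 𝕃 | σ x ≠ η x}).Finite →
      ∑ᶠ ζ ∈ {ζ : 𝕃 → S | ∀ Δ ∈ 𝒞, Set.EqOn ζ σ Δ ∨ Set.EqOn ζ η Δ}, c σ η ζ = 1)
    (hmul : ∀ σ η : 𝕃 → S, ({x : 𝕃 | σ x ≠ η x}).Finite →
      mul (Finsupp.single σ 1) (Finsupp.single η 1)
        = ∑ᶠ ζ ∈ {ζ : 𝕃 → S | ∀ Δ ∈ 𝒞, Set.EqOn ζ σ Δ ∨ Set.EqOn ζ η Δ},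
            c σ η ζ • Finsupp.single ζ (1 : ℝ))
    (hmul0 : ∀ σ η : 𝕃 → S, ¬ ({x : 𝕃 | σ x ≠ η x}).Finite →
      mul (Finsupp.single σ 1) (Finsupp.single η 1) = 0)
    (hidem : ∀ σ : 𝕃 → S,
      mul (Finsupp.single σ 1) (Finsupp.single σ 1) = Finsupp.single σ 1)
    (φ : ((𝕃 → S) →₀ ℝ) →ₗ[ℝ] ℝ)
    (hφmul : ∀ u v, φ (mul u v) = φ u * φ v) (hφ0 : φ ≠ 0) :
    (∀ σ : 𝕃 → S, φ (Finsupp.single σ 1) = 0 ∨ φ (Finsupp.single σ 1) = 1) ∧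
      ∃ η : 𝕃 → S, {σ : 𝕃 → S | φ (Finsupp.single σ 1) = 1}
        = {σ : 𝕃 → S | ({x : 𝕃 | σ x ≠ η x}).Finite} :=
  genetic_gibbs_multiplicative_functionals_general 𝒞 hpart c mul hpos hmul hmul0 hidem φ hφmul hφ0
end

section
/- Let φ : 𝒜 → ℝ be multiplicative and linear with φ(e_η) = 1 for some η. If ζ ∈ E^η (i.e. 𝔇_{ζη} finite), then φ(e_ζ) = 1. -/
/-! Every basis vector `e_σ` is idempotent, so a multiplicative functional sends it to `0` or `1`.
Applying `φ` to `e_ζ e_η = ∑ c_{ζη,ξ} e_ξ` gives `φ(e_ζ) = ∑ c_{ζη,ξ} φ(e_ξ)`: a sum of nonnegative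
terms containing the positive term `c_{ζη,η} φ(e_η) = c_{ζη,η}`. Hence `φ(e_ζ) ≠ 0`, i.e. `φ(e_ζ) = 1`.
The index set `Ω_{ζη}` is finite since the weights are positive and `∑ᶠ` over it is `1`, not the
junk value `0` of an infinite sum. -/

theorem Set.finite_of_finsum_mem_ne_zero {α M : Type*} [AddCommMonoid M] {f : α → M}
    {s : Set α} (hf : ∀ x ∈ s, f x ≠ 0) (h : ∑ᶠ x ∈ s, f x ≠ 0) : s.Finite := by
  by_contra hs
  have hsupp : s ⊆ Function.support f := hf
  exact h (finsum_mem_eq_zero_of_infinite (by rwa [Set.inter_eq_self_of_subset_left hsupp]))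

section MultiplicativeFunctional

variable {M : Type*} [AddCommMonoid M] [Module ℝ M] (mul : M →ₗ[ℝ] M →ₗ[ℝ] M)
  (φ : M →ₗ[ℝ] ℝ) (hφ : ∀ u v, φ (mul u v) = φ u * φ v)
include hφ

theorem apply_eq_zero_or_one_of_mul_self {u : M} (hu : mul u u = u) : φ u = 0 ∨ φ u = 1 :=
  IsIdempotentElem.iff_eq_zero_or_one.mp (by rw [IsIdempotentElem, ← hφ, hu])

theorem apply_nonneg_of_mul_self {u : M} (hu : mul u u = u) : 0 ≤ φ u := by
  rcases apply_eq_zero_or_one_of_mul_self mul φ hφ hu with h | h <;> simp [h]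

theorem apply_eq_one_of_mul_eq_finsum_mem {ι : Type*} {e : ι → M}
    (he : ∀ i, mul (e i) (e i) = e i) {u v : M} (hu : mul u u = u) (hv : φ v = 1)
    {Ω : Set ι} (hΩ : Ω.Finite) {c : ι → ℝ} (hc : ∀ i ∈ Ω, 0 < c i)
    (huv : mul u v = ∑ᶠ i ∈ Ω, c i • e i) (hone : ∃ i ∈ Ω, φ (e i) = 1) : φ u = 1 := by
  have hexpand : φ u = ∑ᶠ i ∈ Ω, c i * φ (e i) := by
    rw [← mul_one (φ u), ← hv, ← hφ, huv]
    simpa using φ.toAddMonoidHom.map_finsum_mem (fun i => c i • e i) hΩ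
  have hpos : 0 < φ u := by
    obtain ⟨i, hi, hei⟩ := hone
    rw [hexpand]
    refine finsum_cond_pos (fun j hj => ?_) ⟨i, hi, by simpa [hei] using hc i hi⟩
      (hΩ.inter_of_right _)
    exact mul_nonneg (hc j hj).le (apply_nonneg_of_mul_self mul φ hφ (he j))
  exact (apply_eq_zero_or_one_of_mul_self mul φ hφ hu).resolve_left hpos.ne'

end MultiplicativeFunctional

theorem functional_constant_on_fertile_class_general {S 𝕃 : Type*}
    (𝒞 : Set (Set 𝕃))
    (c : (𝕃 → S) → (𝕃 → S) → (𝕃 → S) → ℝ)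
    (mul : ((𝕃 → S) →₀ ℝ) →ₗ[ℝ] ((𝕃 → S) →₀ ℝ) →ₗ[ℝ] ((𝕃 → S) →₀ ℝ))
    (hpos : ∀ σ η ζ : 𝕃 → S, ({x : 𝕃 | σ x ≠ η x}).Finite →
      ζ ∈ {ζ : 𝕃 → S | ∀ Δ ∈ 𝒞, Set.EqOn ζ σ Δ ∨ Set.EqOn ζ η Δ} → 0 < c σ η ζ)
    (hsum : ∀ σ η : 𝕃 → S, ({x : 𝕃 | σ x ≠ η x}).Finite →
      ∑ᶠ ζ ∈ {ζ : 𝕃 → S | ∀ Δ ∈ 𝒞, Set.EqOn ζ σ Δ ∨ Set.EqOn ζ η Δ}, c σ η ζ = 1)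
    (hmul : ∀ σ η : 𝕃 → S, ({x : 𝕃 | σ x ≠ η x}).Finite →
      mul (Finsupp.single σ 1) (Finsupp.single η 1)
        = ∑ᶠ ζ ∈ {ζ : 𝕃 → S | ∀ Δ ∈ 𝒞, Set.EqOn ζ σ Δ ∨ Set.EqOn ζ η Δ},
            c σ η ζ • Finsupp.single ζ (1 : ℝ))
    (hidem : ∀ σ : 𝕃 → S,
      mul (Finsupp.single σ 1) (Finsupp.single σ 1) = Finsupp.single σ 1)
    (φ : ((𝕃 → S) →₀ ℝ) →ₗ[ℝ] ℝ)
    (hφmul : ∀ u v, φ (mul u v) = φ u * φ v)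
    (η ζ : 𝕃 → S) (hη : φ (Finsupp.single η 1) = 1)
    (hfin : ({x : 𝕃 | ζ x ≠ η x}).Finite) :
    φ (Finsupp.single ζ 1) = 1 := by
  have hΩ := Set.finite_of_finsum_mem_ne_zero (fun ξ hξ => (hpos ζ η ξ hfin hξ).ne')
    (by rw [hsum ζ η hfin]; exact one_ne_zero)
  exact apply_eq_one_of_mul_eq_finsum_mem mul φ hφmul hidem (hidem ζ) hη hΩ (hpos ζ η · hfin)
    (hmul ζ η hfin) ⟨η, fun _ _ => Or.inr (Set.eqOn_refl _ _), hη⟩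

/-- If φ is a multiplicative linear functional of the 𝒞-genetic Gibbs algebra
with φ(e_η) = 1 and ζ ∈ E^η (i.e. 𝔇_{ζη} finite), then φ(e_ζ) = 1. -/
theorem functional_constant_on_fertile_class {S 𝕃 : Type*} [Finite S] [Countable 𝕃]
    (𝒞 : Set (Set 𝕃)) (hpart : Setoid.IsPartition 𝒞)
    (c : (𝕃 → S) → (𝕃 → S) → (𝕃 → S) → ℝ)
    (mul : ((𝕃 → S) →₀ ℝ) →ₗ[ℝ] ((𝕃 → S) →₀ ℝ) →ₗ[ℝ] ((𝕃 → S) →₀ ℝ))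
    (hpos : ∀ σ η ζ : 𝕃 → S, ({x : 𝕃 | σ x ≠ η x}).Finite →
      ζ ∈ {ζ : 𝕃 → S | ∀ Δ ∈ 𝒞, Set.EqOn ζ σ Δ ∨ Set.EqOn ζ η Δ} → 0 < c σ η ζ)
    (hsum : ∀ σ η : 𝕃 → S, ({x : 𝕃 | σ x ≠ η x}).Finite →
      ∑ᶠ ζ ∈ {ζ : 𝕃 → S | ∀ Δ ∈ 𝒞, Set.EqOn ζ σ Δ ∨ Set.EqOn ζ η Δ}, c σ η ζ = 1)
    (hmul : ∀ σ η : 𝕃 → S, ({x : 𝕃 | σ x ≠ η x}).Finite →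
      mul (Finsupp.single σ 1) (Finsupp.single η 1)
        = ∑ᶠ ζ ∈ {ζ : 𝕃 → S | ∀ Δ ∈ 𝒞, Set.EqOn ζ σ Δ ∨ Set.EqOn ζ η Δ},
            c σ η ζ • Finsupp.single ζ (1 : ℝ))
    (hidem : ∀ σ : 𝕃 → S,
      mul (Finsupp.single σ 1) (Finsupp.single σ 1) = Finsupp.single σ 1)
    (φ : ((𝕃 → S) →₀ ℝ) →ₗ[ℝ] ℝ)
    (hφmul : ∀ u v, φ (mul u v) = φ u * φ v)
    (η ζ : 𝕃 → S) (hη : φ (Finsupp.single η 1) = 1)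
    (hfin : ({x : 𝕃 | ζ x ≠ η x}).Finite) :
    φ (Finsupp.single ζ 1) = 1 :=
  functional_constant_on_fertile_class_general 𝒞 c mul hpos hsum hmul hidem φ hφmul η ζ hη hfin
end

section
/- In the 𝒞-evolution Gibbs algebra ℰ with basis {e_{ση}}_{(σ,η)∈Ω²} and product e_{ση}² = Σ_{(ζ,ξ)∈Ω_{ση}²} c_{ση,ζ}c_{ση,ξ} e_{ζξ} (and distinct basis elements multiplying to zero), an element u is idempotent if and only if u is a finite sum of distinct diagonal basis elements e_{σσ}. -/
/-!
Write `e_p² = ∑ w_p(ζ) w_p(ξ) e_{ζξ}` with `w_p ≥ 0` of total mass at most `1` and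
`w_{σσ} = δ_σ`. For `u = ∑ u_p e_p`, idempotency reads `u_q = ∑_p u_p² w_p(q₁) w_p(q₂)`, so
`u ≥ 0`. On the diagonal, `u_{ζζ} = u_{ζζ}² + d_ζ` where `d_ζ` is the mass deposited by the
off-diagonal support `O`, so `d_ζ ≤ 1/4`; by AM-GM every off-diagonal coefficient is at most
`(d_ζ + d_ξ)/2 ≤ 1/4`. Summing over `O` gives `∑_O u ≤ ∑_O u² ≤ (1/4) ∑_O u`, hence `O = ∅`, and
then `u_p = u_p²` forces `u_p = 1` on the support.
-/

open Finset

theorem Finsupp.bilin_self_eq_sum_sq_smul {ι R M : Type*} [CommSemiring R] [AddCommMonoid M]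
    [Module R M] (B : (ι →₀ R) →ₗ[R] (ι →₀ R) →ₗ[R] M)
    (horth : ∀ p q, p ≠ q → B (Finsupp.single p 1) (Finsupp.single q 1) = 0) (u : ι →₀ R) :
    B u u = ∑ p ∈ u.support, u p ^ 2 • B (Finsupp.single p 1) (Finsupp.single p 1) := by
  have hu : u = ∑ p ∈ u.support, u p • Finsupp.single p 1 := by
    simp_rw [Finsupp.smul_single_one]; exact u.sum_single.symm
  conv_lhs => rw [hu]
  simp only [map_sum, map_smul, LinearMap.sum_apply, LinearMap.smul_apply]
  refine Finset.sum_congr rfl fun p hp => ?_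
  rw [Finset.sum_eq_single p (fun q _ hqp => by rw [horth q p hqp, smul_zero]) (absurd hp),
    smul_smul, sq]

theorem Finsupp.exists_finset_eq_sum_single_diag_iff {α : Type*} [DecidableEq α]
    {u : α × α →₀ ℝ} :
    (∃ F : Finset α, u = ∑ σ ∈ F, Finsupp.single (σ, σ) 1) ↔
      ∀ p ∈ u.support, p.1 = p.2 ∧ u p = 1 := by
  constructor
  · rintro ⟨F, rfl⟩ p hp
    have hsum : ∑ σ ∈ F, Finsupp.single (σ, σ) (1 : ℝ) =
        ∑ q ∈ F.image fun σ => (σ, σ), Finsupp.single q 1 :=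
      (Finset.sum_image (f := fun q => Finsupp.single q (1 : ℝ))
        fun _ _ _ _ h => congrArg Prod.fst h).symm
    rw [hsum, Finsupp.mem_support_iff] at hp
    rw [hsum]
    simp only [Finsupp.finsetSum_apply, Finsupp.single_apply, Finset.sum_ite_eq'] at hp ⊢
    have hmem : p ∈ F.image fun σ => (σ, σ) := by_contra fun h => hp (if_neg h)
    refine ⟨?_, if_pos hmem⟩
    obtain ⟨σ, -, rfl⟩ := mem_image.1 hmem
    rfl
  · intro h
    refine ⟨u.support.image Prod.fst, ?_⟩
    rw [Finset.sum_image fun p hp q hq hpq =>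
      Prod.ext hpq (by rw [← (h p hp).1, ← (h q hq).1, hpq])]
    conv_lhs => rw [← u.sum_single]
    exact Finset.sum_congr rfl fun p hp => by
      obtain ⟨hdiag, hone⟩ := h p hp
      rw [hone, show (p.1, p.1) = p from Prod.ext rfl hdiag]

theorem Set.Finite.of_finsum_mem_ne_zero {β M : Type*} [AddCommMonoid M] {s : Set β} {f : β → M}
    (hf : ∀ x ∈ s, f x ≠ 0) (h : ∑ᶠ x ∈ s, f x ≠ 0) : s.Finite := by
  by_contra hs
  refine h (finsum_mem_eq_zero_of_infinite ?_)
  rwa [Set.inter_eq_left.2 fun x hx => Function.mem_support.2 (hf x hx)]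

theorem Finsupp.finsum_mem_smul_single_one_apply {ι R : Type*} [Semiring R] {s : Set ι}
    (hs : s.Finite) (f : ι → R) (q : ι) :
    (∑ᶠ p ∈ s, f p • Finsupp.single p (1 : R)) q = s.indicator f q := by
  classical
  rw [finsum_mem_eq_finite_toFinset_sum _ hs, Finsupp.finsetSum_apply]
  simp only [Finsupp.smul_apply, Finsupp.single_apply, smul_eq_mul, mul_ite, mul_one, mul_zero,
    Finset.sum_ite_eq', Set.Finite.mem_toFinset, Set.indicator_apply]

/-- `w p` is the weight vector of the basis square: `e_p² = ∑ w p ζ * w p ξ • e_{ζξ}`. -/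
structure IsGibbsWeight {α : Type*} (w : α × α → α → ℝ) : Prop where
  nonneg : ∀ p ζ, 0 ≤ w p ζ
  sum_le_one : ∀ p (A : Finset α), ∑ ζ ∈ A, w p ζ ≤ 1
  diag : ∀ σ, w (σ, σ) = Finsupp.single σ 1

/-- The coefficientwise form of `u * u = u` when `e_p² = ∑ w p ζ * w p ξ • e_{ζξ}`. -/
def IsSquareFixed {α : Type*} (w : α × α → α → ℝ) (u : α × α →₀ ℝ) : Prop :=
  ∀ q, ∑ p ∈ u.support, u p ^ 2 * (w p q.1 * w p q.2) = u q

namespace IsGibbsWeight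

variable {α : Type*} {w : α × α → α → ℝ} {u : α × α →₀ ℝ}

theorem apply_nonneg (hw : IsGibbsWeight w) (hu : IsSquareFixed w u) (q : α × α) :
    0 ≤ u q := by
  rw [← hu q]
  exact sum_nonneg fun p _ => mul_nonneg (sq_nonneg _) (mul_nonneg (hw.nonneg _ _) (hw.nonneg _ _))

variable [DecidableEq α]

theorem mul_apply_of_diag (hw : IsGibbsWeight w) {p : α × α} (hp : p.1 = p.2) (q : α × α) :
    w p q.1 * w p q.2 = if q = p then 1 else 0 := by
  obtain ⟨σ, τ⟩ := p
  obtain rfl : σ = τ := hp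
  obtain ⟨ζ, ξ⟩ := q
  rw [hw.diag, Finsupp.single_apply, Finsupp.single_apply]
  split_ifs <;> simp_all [Prod.ext_iff]

theorem sum_mul_le_one (hw : IsGibbsWeight w) (p : α × α) (T : Finset (α × α)) :
    ∑ q ∈ T, w p q.1 * w p q.2 ≤ 1 := by
  set A := T.image Prod.fst ∪ T.image Prod.snd
  have hT : T ⊆ A ×ˢ A := fun q hq => mem_product.2
    ⟨mem_union_left _ (mem_image_of_mem _ hq), mem_union_right _ (mem_image_of_mem _ hq)⟩
  calc ∑ q ∈ T, w p q.1 * w p q.2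
      ≤ ∑ q ∈ A ×ˢ A, w p q.1 * w p q.2 :=
        sum_le_sum_of_subset_of_nonneg hT fun q _ _ => mul_nonneg (hw.nonneg _ _) (hw.nonneg _ _)
    _ = (∑ ζ ∈ A, w p ζ) * ∑ ξ ∈ A, w p ξ := by rw [sum_mul_sum, sum_product]
    _ ≤ 1 := mul_le_one₀ (hw.sum_le_one p A) (sum_nonneg fun ζ _ => hw.nonneg p ζ)
        (hw.sum_le_one p A)

theorem sum_support_eq_diag_add_offDiag (hw : IsGibbsWeight w) (q : α × α) :
    ∑ p ∈ u.support, u p ^ 2 * (w p q.1 * w p q.2) =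
      (if q.1 = q.2 then u q ^ 2 else 0) +
        ∑ p ∈ u.support with p.1 ≠ p.2, u p ^ 2 * (w p q.1 * w p q.2) := by
  rw [← sum_filter_add_sum_filter_not u.support (fun p => p.1 = p.2)]
  congr 1
  rw [sum_congr rfl fun p hp => by rw [hw.mul_apply_of_diag (mem_filter.1 hp).2 q]]
  simp only [mul_ite, mul_one, mul_zero, sum_ite_eq, mem_filter, Finsupp.mem_support_iff]
  by_cases hq : q.1 = q.2
  · by_cases h0 : u q = 0 <;> simp [hq, h0]
  · simp [hq]

theorem offDiag_sum_le_quarter (hw : IsGibbsWeight w) (hu : IsSquareFixed w u) (ζ : α) :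
    ∑ p ∈ u.support with p.1 ≠ p.2, u p ^ 2 * (w p ζ * w p ζ) ≤ 1 / 4 := by
  have h := hu (ζ, ζ)
  rw [hw.sum_support_eq_diag_add_offDiag, if_pos rfl] at h
  nlinarith [sq_nonneg (u (ζ, ζ) - 1 / 2)]

theorem apply_le_quarter (hw : IsGibbsWeight w) (hu : IsSquareFixed w u) {q : α × α}
    (hq : q.1 ≠ q.2) : u q ≤ 1 / 4 := by
  set O := {p ∈ u.support | p.1 ≠ p.2}
  have hamgm : ∀ p, u p ^ 2 * (w p q.1 * w p q.2) ≤
      (u p ^ 2 * (w p q.1 * w p q.1) + u p ^ 2 * (w p q.2 * w p q.2)) / 2 := fun p => by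
    nlinarith [mul_nonneg (sq_nonneg (u p)) (sq_nonneg (w p q.1 - w p q.2))]
  calc u q = ∑ p ∈ O, u p ^ 2 * (w p q.1 * w p q.2) := by
        rw [← hu q, hw.sum_support_eq_diag_add_offDiag, if_neg hq, zero_add]
    _ ≤ ∑ p ∈ O, (u p ^ 2 * (w p q.1 * w p q.1) + u p ^ 2 * (w p q.2 * w p q.2)) / 2 :=
        sum_le_sum fun p _ => hamgm p
    _ = (∑ p ∈ O, u p ^ 2 * (w p q.1 * w p q.1) +
          ∑ p ∈ O, u p ^ 2 * (w p q.2 * w p q.2)) / 2 := by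
        rw [← sum_div, sum_add_distrib]
    _ ≤ (1 / 4 + 1 / 4) / 2 := by
        gcongr <;> exact hw.offDiag_sum_le_quarter hu _
    _ = 1 / 4 := by norm_num

theorem offDiag_support_eq_empty (hw : IsGibbsWeight w) (hu : IsSquareFixed w u) :
    {p ∈ u.support | p.1 ≠ p.2} = ∅ := by
  set O := {p ∈ u.support | p.1 ≠ p.2}
  have hmass : ∑ q ∈ O, u q ≤ ∑ p ∈ O, u p ^ 2 :=
    calc ∑ q ∈ O, u q = ∑ q ∈ O, ∑ p ∈ O, u p ^ 2 * (w p q.1 * w p q.2) :=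
          sum_congr rfl fun q hq => by
            rw [← hu q, hw.sum_support_eq_diag_add_offDiag, if_neg (mem_filter.1 hq).2, zero_add]
      _ = ∑ p ∈ O, u p ^ 2 * ∑ q ∈ O, w p q.1 * w p q.2 := by
          rw [sum_comm]; simp_rw [mul_sum]
      _ ≤ ∑ p ∈ O, u p ^ 2 :=
          sum_le_sum fun p _ => mul_le_of_le_one_right (sq_nonneg _) (hw.sum_mul_le_one p O)
  have hsq : ∑ p ∈ O, u p ^ 2 ≤ ∑ p ∈ O, u p / 4 := sum_le_sum fun p hp => by
    have := hw.apply_le_quarter hu (mem_filter.1 hp).2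
    have := hw.apply_nonneg hu p
    nlinarith
  have hzero : ∑ q ∈ O, u q = 0 := by
    have := sum_nonneg fun q (_ : q ∈ O) => hw.apply_nonneg hu q
    rw [← sum_div] at hsq
    linarith
  rw [sum_eq_zero_iff_of_nonneg fun q _ => hw.apply_nonneg hu q] at hzero
  exact eq_empty_of_forall_notMem fun p hp =>
    Finsupp.mem_support_iff.1 (mem_filter.1 hp).1 (hzero p hp)

theorem diag_and_eq_one_of_mem_support (hw : IsGibbsWeight w) (hu : IsSquareFixed w u)
    {p : α × α} (hp : p ∈ u.support) : p.1 = p.2 ∧ u p = 1 := by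
  have hdiag : p.1 = p.2 := by
    by_contra h
    have hO : p ∈ {p ∈ u.support | p.1 ≠ p.2} := mem_filter.2 ⟨hp, h⟩
    simp [hw.offDiag_support_eq_empty hu] at hO
  refine ⟨hdiag, mul_left_cancel₀ (Finsupp.mem_support_iff.1 hp) ?_⟩
  have h := hu p
  rw [hw.sum_support_eq_diag_add_offDiag, if_pos hdiag, hw.offDiag_support_eq_empty hu,
    sum_empty, add_zero] at h
  rw [← sq, h, mul_one]

theorem isSquareFixed_of_diag (hw : IsGibbsWeight w)
    (h : ∀ p ∈ u.support, p.1 = p.2 ∧ u p = 1) : IsSquareFixed w u := by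
  intro q
  rw [sum_congr rfl fun p hp => by rw [(h p hp).2, hw.mul_apply_of_diag (h p hp).1]]
  simp only [one_pow, one_mul, sum_ite_eq]
  split_ifs with hq
  · exact (h q hq).2.symm
  · exact (Finsupp.notMem_support_iff.1 hq).symm

theorem isSquareFixed_iff (hw : IsGibbsWeight w) :
    IsSquareFixed w u ↔ ∀ p ∈ u.support, p.1 = p.2 ∧ u p = 1 :=
  ⟨fun hu _ => hw.diag_and_eq_one_of_mem_support hu, hw.isSquareFixed_of_diag⟩

end IsGibbsWeight

section GibbsWeight

variable {S 𝕃 : Type*}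

/-- The set `Ω_{ση}` of the paper. -/
def blockMixtures (𝒞 : Set (Set 𝕃)) (σ η : 𝕃 → S) : Set (𝕃 → S) :=
  {ζ | ∀ Δ ∈ 𝒞, Set.EqOn ζ σ Δ ∨ Set.EqOn ζ η Δ}

theorem blockMixtures_self {𝒞 : Set (Set 𝕃)} (h𝒞 : ⋃₀ 𝒞 = Set.univ) (σ : 𝕃 → S) :
    blockMixtures 𝒞 σ σ = {σ} := by
  refine Set.eq_singleton_iff_unique_mem.2 ⟨fun Δ _ => Or.inl (Set.eqOn_refl σ Δ), ?_⟩
  intro ζ hζ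
  funext x
  obtain ⟨Δ, hΔ, hx⟩ := Set.sUnion_eq_univ_iff.1 h𝒞 x
  exact (hζ Δ hΔ).elim (· hx) (· hx)

open Classical in
/-- `c_{ση}` restricted to `Ω_{ση}`, and `0` when `σ` and `η` differ at infinitely many sites. -/
noncomputable def gibbsWeight (𝒞 : Set (Set 𝕃)) (c : (𝕃 → S) → (𝕃 → S) → (𝕃 → S) → ℝ)
    (p : (𝕃 → S) × (𝕃 → S)) : (𝕃 → S) → ℝ :=
  if {x | p.1 x ≠ p.2 x}.Finite then (blockMixtures 𝒞 p.1 p.2).indicator (c p.1 p.2) else 0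

variable {𝒞 : Set (Set 𝕃)} {c : (𝕃 → S) → (𝕃 → S) → (𝕃 → S) → ℝ}

/-- A `finsum` over an infinite support is `0`, so the normalisation forces `Ω_{ση}` finite. -/
theorem blockMixtures_finite {σ η : 𝕃 → S}
    (hpos : ∀ ζ ∈ blockMixtures 𝒞 σ η, 0 < c σ η ζ)
    (hsum : ∑ᶠ ζ ∈ blockMixtures 𝒞 σ η, c σ η ζ = 1) : (blockMixtures 𝒞 σ η).Finite :=
  .of_finsum_mem_ne_zero (fun ζ hζ => (hpos ζ hζ).ne') (hsum ▸ one_ne_zero)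

theorem gibbsWeight_nonneg
    (hpos : ∀ σ η ζ : 𝕃 → S, ({x : 𝕃 | σ x ≠ η x}).Finite →
      ζ ∈ blockMixtures 𝒞 σ η → 0 < c σ η ζ) (p : (𝕃 → S) × (𝕃 → S)) (ζ : 𝕃 → S) :
    0 ≤ gibbsWeight 𝒞 c p ζ := by
  unfold gibbsWeight
  split_ifs with hD
  · exact Set.indicator_nonneg (fun ζ hζ => (hpos _ _ ζ hD hζ).le) ζ
  · exact le_rfl

theorem sum_gibbsWeight_le_one
    (hpos : ∀ σ η ζ : 𝕃 → S, ({x : 𝕃 | σ x ≠ η x}).Finite →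
      ζ ∈ blockMixtures 𝒞 σ η → 0 < c σ η ζ)
    (hsum : ∀ σ η : 𝕃 → S, ({x : 𝕃 | σ x ≠ η x}).Finite →
      ∑ᶠ ζ ∈ blockMixtures 𝒞 σ η, c σ η ζ = 1)
    (p : (𝕃 → S) × (𝕃 → S)) (A : Finset (𝕃 → S)) :
    ∑ ζ ∈ A, gibbsWeight 𝒞 c p ζ ≤ 1 := by
  classical
  unfold gibbsWeight
  split_ifs with hD
  · have hfin := blockMixtures_finite (hpos _ _ · hD) (hsum _ _ hD)
    calc ∑ ζ ∈ A, (blockMixtures 𝒞 p.1 p.2).indicator (c p.1 p.2) ζ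
        = ∑ ζ ∈ A with ζ ∈ blockMixtures 𝒞 p.1 p.2, c p.1 p.2 ζ :=
          sum_indicator_eq_sum_filter _ (fun _ => c p.1 p.2) (fun _ => _) id
      _ ≤ ∑ ζ ∈ hfin.toFinset, c p.1 p.2 ζ :=
          sum_le_sum_of_subset_of_nonneg
            (fun ζ hζ => hfin.mem_toFinset.2 (mem_filter.1 hζ).2)
            (fun ζ hζ _ => (hpos _ _ ζ hD (hfin.mem_toFinset.1 hζ)).le)
      _ = 1 := by rw [← finsum_mem_eq_finite_toFinset_sum _ hfin, hsum _ _ hD]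
  · simp

theorem gibbsWeight_self (h𝒞 : ⋃₀ 𝒞 = Set.univ)
    (hsum : ∀ σ η : 𝕃 → S, ({x : 𝕃 | σ x ≠ η x}).Finite →
      ∑ᶠ ζ ∈ blockMixtures 𝒞 σ η, c σ η ζ = 1) (σ : 𝕃 → S) :
    gibbsWeight 𝒞 c (σ, σ) = Finsupp.single σ 1 := by
  have hD : ({x : 𝕃 | σ x ≠ σ x}).Finite := by simp
  have hσ : c σ σ σ = 1 := by
    simpa [blockMixtures_self h𝒞] using hsum σ σ hD
  funext ζ
  classical
  rw [gibbsWeight, if_pos hD, blockMixtures_self h𝒞, Set.indicator_apply, Finsupp.single_apply]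
  split_ifs <;> simp_all [eq_comm]

theorem isGibbsWeight_gibbsWeight (h𝒞 : ⋃₀ 𝒞 = Set.univ)
    (hpos : ∀ σ η ζ : 𝕃 → S, ({x : 𝕃 | σ x ≠ η x}).Finite →
      ζ ∈ blockMixtures 𝒞 σ η → 0 < c σ η ζ)
    (hsum : ∀ σ η : 𝕃 → S, ({x : 𝕃 | σ x ≠ η x}).Finite →
      ∑ᶠ ζ ∈ blockMixtures 𝒞 σ η, c σ η ζ = 1) :
    IsGibbsWeight (gibbsWeight 𝒞 c) where
  nonneg := gibbsWeight_nonneg hpos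
  sum_le_one := sum_gibbsWeight_le_one hpos hsum
  diag := gibbsWeight_self h𝒞 hsum

theorem mul_single_self_apply_eq_gibbsWeight_mul
    (mul : (((𝕃 → S) × (𝕃 → S)) →₀ ℝ) →ₗ[ℝ]
      (((𝕃 → S) × (𝕃 → S)) →₀ ℝ) →ₗ[ℝ] (((𝕃 → S) × (𝕃 → S)) →₀ ℝ))
    (hpos : ∀ σ η ζ : 𝕃 → S, ({x : 𝕃 | σ x ≠ η x}).Finite →
      ζ ∈ blockMixtures 𝒞 σ η → 0 < c σ η ζ)
    (hsum : ∀ σ η : 𝕃 → S, ({x : 𝕃 | σ x ≠ η x}).Finite →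
      ∑ᶠ ζ ∈ blockMixtures 𝒞 σ η, c σ η ζ = 1)
    (hmul : ∀ σ η : 𝕃 → S, ({x : 𝕃 | σ x ≠ η x}).Finite →
      mul (Finsupp.single (σ, η) 1) (Finsupp.single (σ, η) 1)
        = ∑ᶠ q ∈ blockMixtures 𝒞 σ η ×ˢ blockMixtures 𝒞 σ η,
            (c σ η q.1 * c σ η q.2) • Finsupp.single q (1 : ℝ))
    (hmul0 : ∀ σ η : 𝕃 → S, ¬ ({x : 𝕃 | σ x ≠ η x}).Finite →
      mul (Finsupp.single (σ, η) 1) (Finsupp.single (σ, η) 1) = 0)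
    (p q : (𝕃 → S) × (𝕃 → S)) :
    mul (Finsupp.single p 1) (Finsupp.single p 1) q =
      gibbsWeight 𝒞 c p q.1 * gibbsWeight 𝒞 c p q.2 := by
  by_cases hD : ({x : 𝕃 | p.1 x ≠ p.2 x}).Finite
  · have hfin := blockMixtures_finite (hpos _ _ · hD) (hsum _ _ hD)
    rw [hmul _ _ hD, Finsupp.finsum_mem_smul_single_one_apply (hfin.prod hfin), gibbsWeight,
      if_pos hD]
    classical
    simp only [Set.indicator_apply, Set.mem_prod]
    split_ifs <;> simp_all
  · simp [hmul0 _ _ hD, gibbsWeight, hD]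

end GibbsWeight

theorem evolution_gibbs_idempotents_general {S 𝕃 : Type*}
    (𝒞 : Set (Set 𝕃)) (hpart : Setoid.IsPartition 𝒞)
    (c : (𝕃 → S) → (𝕃 → S) → (𝕃 → S) → ℝ)
    (mul : (((𝕃 → S) × (𝕃 → S)) →₀ ℝ) →ₗ[ℝ]
      (((𝕃 → S) × (𝕃 → S)) →₀ ℝ) →ₗ[ℝ] (((𝕃 → S) × (𝕃 → S)) →₀ ℝ))
    (hpos : ∀ σ η ζ : 𝕃 → S, ({x : 𝕃 | σ x ≠ η x}).Finite →
      ζ ∈ {ζ : 𝕃 → S | ∀ Δ ∈ 𝒞, Set.EqOn ζ σ Δ ∨ Set.EqOn ζ η Δ} → 0 < c σ η ζ)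
    (hsum : ∀ σ η : 𝕃 → S, ({x : 𝕃 | σ x ≠ η x}).Finite →
      ∑ᶠ ζ ∈ {ζ : 𝕃 → S | ∀ Δ ∈ 𝒞, Set.EqOn ζ σ Δ ∨ Set.EqOn ζ η Δ}, c σ η ζ = 1)
    (hmul : ∀ σ η : 𝕃 → S, ({x : 𝕃 | σ x ≠ η x}).Finite →
      mul (Finsupp.single (σ, η) 1) (Finsupp.single (σ, η) 1)
        = ∑ᶠ q ∈ ({ζ : 𝕃 → S | ∀ Δ ∈ 𝒞, Set.EqOn ζ σ Δ ∨ Set.EqOn ζ η Δ} ×ˢ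
              {ζ : 𝕃 → S | ∀ Δ ∈ 𝒞, Set.EqOn ζ σ Δ ∨ Set.EqOn ζ η Δ}),
            (c σ η q.1 * c σ η q.2) • Finsupp.single q (1 : ℝ))
    (hmul0 : ∀ σ η : 𝕃 → S, ¬ ({x : 𝕃 | σ x ≠ η x}).Finite →
      mul (Finsupp.single (σ, η) 1) (Finsupp.single (σ, η) 1) = 0)
    (horth : ∀ p q : (𝕃 → S) × (𝕃 → S), p ≠ q →
      mul (Finsupp.single p 1) (Finsupp.single q 1) = 0)
    (u : ((𝕃 → S) × (𝕃 → S)) →₀ ℝ) :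
    mul u u = u ↔
      ∃ F : Finset (𝕃 → S), u = ∑ σ ∈ F, Finsupp.single (σ, σ) (1 : ℝ) := by
  classical
  have hw := isGibbsWeight_gibbsWeight hpart.sUnion_eq_univ hpos hsum
  have hsq := mul_single_self_apply_eq_gibbsWeight_mul mul hpos hsum hmul hmul0
  rw [Finsupp.exists_finset_eq_sum_single_diag_iff, ← hw.isSquareFixed_iff, IsSquareFixed,
    Finsupp.bilin_self_eq_sum_sq_smul mul horth, Finsupp.ext_iff]
  simp only [Finsupp.finsetSum_apply, Finsupp.smul_apply, smul_eq_mul, hsq]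

/-- In the 𝒞-evolution Gibbs algebra ℰ, an element u is idempotent iff u is a
finite sum of distinct diagonal basis elements e_{σσ}. -/
theorem evolution_gibbs_idempotents {S 𝕃 : Type*} [Finite S] [Countable 𝕃]
    (𝒞 : Set (Set 𝕃)) (hpart : Setoid.IsPartition 𝒞)
    (c : (𝕃 → S) → (𝕃 → S) → (𝕃 → S) → ℝ)
    (mul : (((𝕃 → S) × (𝕃 → S)) →₀ ℝ) →ₗ[ℝ]
      (((𝕃 → S) × (𝕃 → S)) →₀ ℝ) →ₗ[ℝ] (((𝕃 → S) × (𝕃 → S)) →₀ ℝ))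
    (hpos : ∀ σ η ζ : 𝕃 → S, ({x : 𝕃 | σ x ≠ η x}).Finite →
      ζ ∈ {ζ : 𝕃 → S | ∀ Δ ∈ 𝒞, Set.EqOn ζ σ Δ ∨ Set.EqOn ζ η Δ} → 0 < c σ η ζ)
    (hsum : ∀ σ η : 𝕃 → S, ({x : 𝕃 | σ x ≠ η x}).Finite →
      ∑ᶠ ζ ∈ {ζ : 𝕃 → S | ∀ Δ ∈ 𝒞, Set.EqOn ζ σ Δ ∨ Set.EqOn ζ η Δ}, c σ η ζ = 1)
    (hmul : ∀ σ η : 𝕃 → S, ({x : 𝕃 | σ x ≠ η x}).Finite →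
      mul (Finsupp.single (σ, η) 1) (Finsupp.single (σ, η) 1)
        = ∑ᶠ q ∈ ({ζ : 𝕃 → S | ∀ Δ ∈ 𝒞, Set.EqOn ζ σ Δ ∨ Set.EqOn ζ η Δ} ×ˢ
              {ζ : 𝕃 → S | ∀ Δ ∈ 𝒞, Set.EqOn ζ σ Δ ∨ Set.EqOn ζ η Δ}),
            (c σ η q.1 * c σ η q.2) • Finsupp.single q (1 : ℝ))
    (hmul0 : ∀ σ η : 𝕃 → S, ¬ ({x : 𝕃 | σ x ≠ η x}).Finite →
      mul (Finsupp.single (σ, η) 1) (Finsupp.single (σ, η) 1) = 0)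
    (horth : ∀ p q : (𝕃 → S) × (𝕃 → S), p ≠ q →
      mul (Finsupp.single p 1) (Finsupp.single q 1) = 0)
    (u : ((𝕃 → S) × (𝕃 → S)) →₀ ℝ) :
    mul u u = u ↔
      ∃ F : Finset (𝕃 → S), u = ∑ σ ∈ F, Finsupp.single (σ, σ) (1 : ℝ) :=
  evolution_gibbs_idempotents_general 𝒞 hpart c mul hpos hsum hmul hmul0 horth u
end

section
/- The evolution algebra ℰ is isomorphic to the tensor module 𝒜 ⊗ 𝒜 equipped with the product (e_σ ⊗ e_η) * (e_{σ'} ⊗ e_{η'}) := δ_{σσ'}δ_{ηη'} (e_σ·e_η) ⊗ (e_σ·e_η), via the linear map e_{ση} ↦ e_σ ⊗ e_η. -/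
/-!
The isomorphism is the canonical `(Ω × Ω →₀ ℝ) ≃ (Ω →₀ ℝ) ⊗ (Ω →₀ ℝ)`, sending `e_{ση}` to
`e_σ ⊗ e_η`. Both products are bilinear, so it suffices to compare them on pairs of basis
vectors. Off the diagonal both vanish; on the diagonal the finite sum over `Ω_{ση}²` defining
`e_{ση}²` splits as the tensor square of the sum over `Ω_{ση}` defining `e_σ · e_η`. The set
`Ω_{ση}` is finite when `σ` and `η` differ at finitely many sites, since its members agree with
`σ` off that set.
-/

open TensorProduct

noncomputable instance tensorZero {α : Type*} : Zero ((α →₀ ℝ) ⊗[ℝ] (α →₀ ℝ)) :=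
  AddMonoid.toZero

theorem Set.Finite.setOf_eqOn_compl {α β : Type*} [Finite β] {s : Set α} (hs : s.Finite)
    (σ : α → β) : {ζ : α → β | Set.EqOn ζ σ sᶜ}.Finite := by
  have : Finite s := hs
  refine Set.Finite.of_finite_image (f := fun ζ (x : s) ↦ ζ x) (Set.toFinite _)
    fun ζ hζ ζ' hζ' h ↦ ?_
  funext x
  by_cases hx : x ∈ s
  · exact congrFun h ⟨x, hx⟩
  · rw [hζ hx, hζ' hx]

/-- The paper's `Ω_{ση}`. -/
def offspring {α β : Type*} (𝒞 : Set (Set α)) (σ η : α → β) : Set (α → β) :=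
  {ζ | ∀ Δ ∈ 𝒞, Set.EqOn ζ σ Δ ∨ Set.EqOn ζ η Δ}

theorem offspring_subset_eqOn_compl {α β : Type*} {𝒞 : Set (Set α)}
    (h𝒞 : ⋃₀ 𝒞 = Set.univ) (σ η : α → β) :
    offspring 𝒞 σ η ⊆ {ζ | Set.EqOn ζ σ {x | σ x ≠ η x}ᶜ} := by
  intro ζ hζ x hx
  obtain ⟨Δ, hΔ, hxΔ⟩ := Set.mem_sUnion.mp (h𝒞 ▸ Set.mem_univ x)
  rcases hζ Δ hΔ with h | h
  · exact h hxΔ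
  · rw [h hxΔ, not_not.mp hx]

theorem offspring_finite {α β : Type*} [Finite β] {𝒞 : Set (Set α)}
    (h𝒞 : ⋃₀ 𝒞 = Set.univ) {σ η : α → β} (hD : {x | σ x ≠ η x}.Finite) :
    (offspring 𝒞 σ η).Finite :=
  (hD.setOf_eqOn_compl σ).subset (offspring_subset_eqOn_compl h𝒞 σ η)

theorem finsuppTensorFinsupp'_symm_finsum_prod {R α β : Type*} [CommSemiring R]
    {s : Set α} {t : Set β} (hs : s.Finite) (ht : t.Finite) (a : α → R) (b : β → R) :
    (finsuppTensorFinsupp' R α β).symm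
        (∑ᶠ q ∈ s ×ˢ t, (a q.1 * b q.2) • Finsupp.single q (1 : R))
      = (∑ᶠ x ∈ s, a x • Finsupp.single x (1 : R)) ⊗ₜ[R]
          (∑ᶠ y ∈ t, b y • Finsupp.single y (1 : R)) := by
  rw [LinearEquiv.symm_apply_eq, finsum_mem_eq_finite_toFinset_sum _ (hs.prod ht),
    finsum_mem_eq_finite_toFinset_sum _ hs, finsum_mem_eq_finite_toFinset_sum _ ht,
    ← Set.Finite.toFinset_prod hs ht, Finset.sum_product, sum_tmul, map_sum]
  refine Finset.sum_congr rfl fun x _ ↦ ?_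
  rw [tmul_sum, map_sum]
  refine Finset.sum_congr rfl fun y _ ↦ ?_
  rw [smul_tmul_smul, map_smul, finsuppTensorFinsupp'_single_tmul_single, mul_one]

theorem LinearEquiv.map_bilinear_of_single {R α M : Type*} [CommSemiring R]
    [AddCommMonoid M] [Module R M] (φ : (α →₀ R) ≃ₗ[R] M)
    (mul : (α →₀ R) →ₗ[R] (α →₀ R) →ₗ[R] (α →₀ R)) (star : M →ₗ[R] M →ₗ[R] M)
    (h : ∀ p q, φ (mul (Finsupp.single p 1) (Finsupp.single q 1))
      = star (φ (Finsupp.single p 1)) (φ (Finsupp.single q 1))) (u v : α →₀ R) :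
    φ (mul u v) = star (φ u) (φ v) := by
  have : mul.compr₂ φ.toLinearMap = (star.comp φ.toLinearMap).compl₂ φ.toLinearMap :=
    LinearMap.ext_basis Finsupp.basisSingleOne Finsupp.basisSingleOne fun p q ↦ by
      simpa using h p q
  exact LinearMap.congr_fun₂ this u v

theorem evolution_gibbs_iso_tensor_general {S 𝕃 : Type*} [Finite S]
    (𝒞 : Set (Set 𝕃)) (hpart : Setoid.IsPartition 𝒞)
    (c : (𝕃 → S) → (𝕃 → S) → (𝕃 → S) → ℝ)
    -- the genetic Gibbs algebra product on 𝒜 = Ω →₀ ℝ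
    (mulA : ((𝕃 → S) →₀ ℝ) →ₗ[ℝ] ((𝕃 → S) →₀ ℝ) →ₗ[ℝ] ((𝕃 → S) →₀ ℝ))
    (hmulA : ∀ σ η : 𝕃 → S, ({x : 𝕃 | σ x ≠ η x}).Finite →
      mulA (Finsupp.single σ 1) (Finsupp.single η 1)
        = ∑ᶠ ζ ∈ {ζ : 𝕃 → S | ∀ Δ ∈ 𝒞, Set.EqOn ζ σ Δ ∨ Set.EqOn ζ η Δ},
            c σ η ζ • Finsupp.single ζ (1 : ℝ))
    (hmulA0 : ∀ σ η : 𝕃 → S, ¬ ({x : 𝕃 | σ x ≠ η x}).Finite →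
      mulA (Finsupp.single σ 1) (Finsupp.single η 1) = 0)
    -- the evolution Gibbs algebra product on ℰ = Ω² →₀ ℝ
    (mulE : (((𝕃 → S) × (𝕃 → S)) →₀ ℝ) →ₗ[ℝ]
      (((𝕃 → S) × (𝕃 → S)) →₀ ℝ) →ₗ[ℝ] (((𝕃 → S) × (𝕃 → S)) →₀ ℝ))
    (hmulE : ∀ σ η : 𝕃 → S, ({x : 𝕃 | σ x ≠ η x}).Finite →
      mulE (Finsupp.single (σ, η) 1) (Finsupp.single (σ, η) 1)
        = ∑ᶠ q ∈ ({ζ : 𝕃 → S | ∀ Δ ∈ 𝒞, Set.EqOn ζ σ Δ ∨ Set.EqOn ζ η Δ} ×ˢ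
              {ζ : 𝕃 → S | ∀ Δ ∈ 𝒞, Set.EqOn ζ σ Δ ∨ Set.EqOn ζ η Δ}),
            (c σ η q.1 * c σ η q.2) • Finsupp.single q (1 : ℝ))
    (hmulE0 : ∀ σ η : 𝕃 → S, ¬ ({x : 𝕃 | σ x ≠ η x}).Finite →
      mulE (Finsupp.single (σ, η) 1) (Finsupp.single (σ, η) 1) = 0)
    (horth : ∀ p q : (𝕃 → S) × (𝕃 → S), p ≠ q →
      mulE (Finsupp.single p 1) (Finsupp.single q 1) = 0)
    -- the product * on the tensor module 𝒜 ⊗ 𝒜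
    (star : (((𝕃 → S) →₀ ℝ) ⊗[ℝ] ((𝕃 → S) →₀ ℝ)) →ₗ[ℝ]
      (((𝕃 → S) →₀ ℝ) ⊗[ℝ] ((𝕃 → S) →₀ ℝ)) →ₗ[ℝ]
      (((𝕃 → S) →₀ ℝ) ⊗[ℝ] ((𝕃 → S) →₀ ℝ)))
    (hstar : ∀ σ η : 𝕃 → S,
      star (Finsupp.single σ (1 : ℝ) ⊗ₜ[ℝ] Finsupp.single η (1 : ℝ))
          (Finsupp.single σ (1 : ℝ) ⊗ₜ[ℝ] Finsupp.single η (1 : ℝ))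
        = (mulA (Finsupp.single σ 1) (Finsupp.single η 1)) ⊗ₜ[ℝ]
            (mulA (Finsupp.single σ 1) (Finsupp.single η 1)))
    (hstar0 : ∀ σ η σ' η' : 𝕃 → S, (σ, η) ≠ (σ', η') →
      star (Finsupp.single σ (1 : ℝ) ⊗ₜ[ℝ] Finsupp.single η (1 : ℝ))
          (Finsupp.single σ' (1 : ℝ) ⊗ₜ[ℝ] Finsupp.single η' (1 : ℝ)) = 0) :
    ∃ φ : (((𝕃 → S) × (𝕃 → S)) →₀ ℝ) ≃ₗ[ℝ]
        (((𝕃 → S) →₀ ℝ) ⊗[ℝ] ((𝕃 → S) →₀ ℝ)),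
      (∀ p : (𝕃 → S) × (𝕃 → S),
        φ (Finsupp.single p 1)
          = Finsupp.single p.1 (1 : ℝ) ⊗ₜ[ℝ] Finsupp.single p.2 (1 : ℝ)) ∧
      (∀ u v, φ (mulE u v) = star (φ u) (φ v)) := by
  set φ := (finsuppTensorFinsupp' ℝ (𝕃 → S) (𝕃 → S)).symm
  have hφ : ∀ p : (𝕃 → S) × (𝕃 → S),
      φ (Finsupp.single p 1) = Finsupp.single p.1 1 ⊗ₜ[ℝ] Finsupp.single p.2 1 :=
    fun p ↦ finsuppTensorFinsupp'_symm_single_eq_single_one_tmul ℝ _ _ p 1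
  refine ⟨φ, hφ, φ.map_bilinear_of_single mulE star fun p q ↦ ?_⟩
  rcases eq_or_ne p q with rfl | hpq
  · obtain ⟨σ, η⟩ := p
    rw [hφ, hstar]
    by_cases hD : {x | σ x ≠ η x}.Finite
    · have hK := offspring_finite hpart.sUnion_eq_univ hD
      rw [hmulE σ η hD, hmulA σ η hD]
      exact finsuppTensorFinsupp'_symm_finsum_prod hK hK _ _
    · rw [hmulE0 σ η hD, hmulA0 σ η hD, map_zero, zero_tmul]
  · rw [horth p q hpq, map_zero, hφ, hφ, hstar0 _ _ _ _ hpq]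

/-- The 𝒞-evolution Gibbs algebra ℰ is isomorphic to the tensor module
𝒜 ⊗ 𝒜 of the genetic Gibbs algebra 𝒜 equipped with the product
(e_σ ⊗ e_η) * (e_σ' ⊗ e_η') = δ_{σσ'}δ_{ηη'} (e_σ·e_η) ⊗ (e_σ·e_η),
via the linear map e_{ση} ↦ e_σ ⊗ e_η. -/
theorem evolution_gibbs_iso_tensor {S 𝕃 : Type*} [Finite S] [Countable 𝕃]
    (𝒞 : Set (Set 𝕃)) (hpart : Setoid.IsPartition 𝒞)
    (c : (𝕃 → S) → (𝕃 → S) → (𝕃 → S) → ℝ)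
    -- the genetic Gibbs algebra product on 𝒜 = Ω →₀ ℝ
    (mulA : ((𝕃 → S) →₀ ℝ) →ₗ[ℝ] ((𝕃 → S) →₀ ℝ) →ₗ[ℝ] ((𝕃 → S) →₀ ℝ))
    (hmulA : ∀ σ η : 𝕃 → S, ({x : 𝕃 | σ x ≠ η x}).Finite →
      mulA (Finsupp.single σ 1) (Finsupp.single η 1)
        = ∑ᶠ ζ ∈ {ζ : 𝕃 → S | ∀ Δ ∈ 𝒞, Set.EqOn ζ σ Δ ∨ Set.EqOn ζ η Δ},
            c σ η ζ • Finsupp.single ζ (1 : ℝ))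
    (hmulA0 : ∀ σ η : 𝕃 → S, ¬ ({x : 𝕃 | σ x ≠ η x}).Finite →
      mulA (Finsupp.single σ 1) (Finsupp.single η 1) = 0)
    -- the evolution Gibbs algebra product on ℰ = Ω² →₀ ℝ
    (mulE : (((𝕃 → S) × (𝕃 → S)) →₀ ℝ) →ₗ[ℝ]
      (((𝕃 → S) × (𝕃 → S)) →₀ ℝ) →ₗ[ℝ] (((𝕃 → S) × (𝕃 → S)) →₀ ℝ))
    (hmulE : ∀ σ η : 𝕃 → S, ({x : 𝕃 | σ x ≠ η x}).Finite →
      mulE (Finsupp.single (σ, η) 1) (Finsupp.single (σ, η) 1)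
        = ∑ᶠ q ∈ ({ζ : 𝕃 → S | ∀ Δ ∈ 𝒞, Set.EqOn ζ σ Δ ∨ Set.EqOn ζ η Δ} ×ˢ
              {ζ : 𝕃 → S | ∀ Δ ∈ 𝒞, Set.EqOn ζ σ Δ ∨ Set.EqOn ζ η Δ}),
            (c σ η q.1 * c σ η q.2) • Finsupp.single q (1 : ℝ))
    (hmulE0 : ∀ σ η : 𝕃 → S, ¬ ({x : 𝕃 | σ x ≠ η x}).Finite →
      mulE (Finsupp.single (σ, η) 1) (Finsupp.single (σ, η) 1) = 0)
    (horth : ∀ p q : (𝕃 → S) × (𝕃 → S), p ≠ q →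
      mulE (Finsupp.single p 1) (Finsupp.single q 1) = 0)
    -- the product * on the tensor module 𝒜 ⊗ 𝒜
    (star : (((𝕃 → S) →₀ ℝ) ⊗[ℝ] ((𝕃 → S) →₀ ℝ)) →ₗ[ℝ]
      (((𝕃 → S) →₀ ℝ) ⊗[ℝ] ((𝕃 → S) →₀ ℝ)) →ₗ[ℝ]
      (((𝕃 → S) →₀ ℝ) ⊗[ℝ] ((𝕃 → S) →₀ ℝ)))
    (hstar : ∀ σ η : 𝕃 → S,
      star (Finsupp.single σ (1 : ℝ) ⊗ₜ[ℝ] Finsupp.single η (1 : ℝ))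
          (Finsupp.single σ (1 : ℝ) ⊗ₜ[ℝ] Finsupp.single η (1 : ℝ))
        = (mulA (Finsupp.single σ 1) (Finsupp.single η 1)) ⊗ₜ[ℝ]
            (mulA (Finsupp.single σ 1) (Finsupp.single η 1)))
    (hstar0 : ∀ σ η σ' η' : 𝕃 → S, (σ, η) ≠ (σ', η') →
      star (Finsupp.single σ (1 : ℝ) ⊗ₜ[ℝ] Finsupp.single η (1 : ℝ))
          (Finsupp.single σ' (1 : ℝ) ⊗ₜ[ℝ] Finsupp.single η' (1 : ℝ)) = 0) :
    ∃ φ : (((𝕃 → S) × (𝕃 → S)) →₀ ℝ) ≃ₗ[ℝ]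
        (((𝕃 → S) →₀ ℝ) ⊗[ℝ] ((𝕃 → S) →₀ ℝ)),
      (∀ p : (𝕃 → S) × (𝕃 → S),
        φ (Finsupp.single p 1)
          = Finsupp.single p.1 (1 : ℝ) ⊗ₜ[ℝ] Finsupp.single p.2 (1 : ℝ)) ∧
      (∀ u v, φ (mulE u v) = star (φ u) (φ v)) :=
  evolution_gibbs_iso_tensor_general 𝒞 hpart c mulA hmulA hmulA0 mulE hmulE hmulE0 horth star hstar
    hstar0
end

section
/- (Atomic clusters, evolution coefficients determine equivalence.) Suppose 𝒞 = 𝒞_⊙ is the partition of 𝕃 into singletons, and suppose Φ, Ψ are admissible potentials such that for all ζ, η with 𝔇_{ζη} finite and all σ ∈ Ω_{ζη}: h^Φ_{𝔇_{ζη}}(σ)/Σ_{ξ∈Ω_{ζη}} h^Φ_{𝔇_{ζη}}(ξ) = h^Ψ_{𝔇_{ζη}}(σ)/Σ_{ξ∈Ω_{ζη}} h^Ψ_{𝔇_{ζη}}(ξ), where h^Φ_Λ = exp(−H^Φ_Λ). Then for every finite Λ and every ζ ∈ Ω, the ratio h_Λ^Φ(ξζ_{Λᶜ}) / h_Λ^Ψ(ξζ_{Λᶜ})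 is independent of ξ ∈ S^Λ; i.e. H_Λ^Φ − H_Λ^Ψ depends only on the configuration outside Λ, so Φ and Ψ are equivalent. -/
/-!
Let `σ, τ` agree off the finite set `Λ`, and let `D ⊆ Λ` be the set where they differ.
The offspring set of `σ` and `τ` is finite and contains both parents, so the hypothesis on
normalized weights, read at `σ` and at `τ`, says `H_D^Φ - H_D^Ψ` takes the same value
(the log of the ratio of the two partition sums) at `σ` and `τ`. Passing from `D` to `Λ` costs
only the interactions `Φ_A` with `A` meeting `Λ` but not `D`; by locality they see only sites
off `D`, where `σ = τ`.
-/

/-- The Hamiltonian in the finite volume Λ for the interaction potential Φ: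
H_Λ^Φ(σ) = Σ_{A finite, A ∩ Λ ≠ ∅} Φ_A(σ). -/
noncomputable def Ham {S 𝕃 : Type*} [DecidableEq 𝕃]
    (Φ : Finset 𝕃 → (𝕃 → S) → ℝ) (Λ : Finset 𝕃) (σ : 𝕃 → S) : ℝ :=
  ∑' A : Finset 𝕃, if (A ∩ Λ).Nonempty then Φ A σ else 0

open Real

theorem Ham_sub_Ham_eq_of_eqOn_compl {S 𝕃 : Type*} [DecidableEq 𝕃]
    {Φ : Finset 𝕃 → (𝕃 → S) → ℝ}
    (hloc : ∀ (A : Finset 𝕃) (σ τ : 𝕃 → S), Set.EqOn σ τ ↑A → Φ A σ = Φ A τ)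
    (hadm : ∀ (Λ : Finset 𝕃) (σ : 𝕃 → S),
      Summable (fun A : Finset 𝕃 => if (A ∩ Λ).Nonempty then Φ A σ else 0))
    {Λ D : Finset 𝕃} (hD : D ⊆ Λ) {σ τ : 𝕃 → S} (hστ : Set.EqOn σ τ (↑D)ᶜ) :
    Ham Φ Λ σ - Ham Φ D σ = Ham Φ Λ τ - Ham Φ D τ := by
  unfold Ham
  rw [← (hadm Λ σ).tsum_sub (hadm D σ), ← (hadm Λ τ).tsum_sub (hadm D τ)]
  congr 1 with A
  by_cases hAD : (A ∩ D).Nonempty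
  · simp [hAD, hAD.mono (Finset.inter_subset_inter le_rfl hD)]
  · have hA : Φ A σ = Φ A τ :=
      hloc A σ τ fun x hxA => hστ fun hxD => hAD ⟨x, Finset.mem_inter.2 ⟨hxA, hxD⟩⟩
    simp [hAD, hA]

theorem Set.Finite.setOf_forall_eq_or_eq {α β : Type*} {ζ η : α → β}
    (h : {x | ζ x ≠ η x}.Finite) : {ξ : α → β | ∀ x, ξ x = ζ x ∨ ξ x = η x}.Finite := by
  classical
  refine (h.finite_subsets.image fun T => T.piecewise η ζ).subset fun ξ hξ => ?_
  refine ⟨{x | ξ x ≠ ζ x}, fun x hx => ?_, funext fun x => ?_⟩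
  · exact fun hζη => hx (((hξ x).resolve_left hx).trans hζη.symm)
  · simp only [Set.piecewise, Set.mem_ofPred_eq]
    split_ifs with hx
    · exact ((hξ x).resolve_left hx).symm
    · exact (not_not.1 hx).symm

theorem sub_eq_log_sub_log_of_exp_neg_div_eq {a b A B : ℝ} (hA : 0 < A) (hB : 0 < B)
    (h : exp (-a) / A = exp (-b) / B) : a - b = log B - log A := by
  rw [div_eq_div_iff hA.ne' hB.ne'] at h
  have hlog := congrArg log h
  rw [log_mul (exp_pos _).ne' hB.ne', log_mul (exp_pos _).ne' hA.ne', log_exp, log_exp] at hlog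
  linarith

theorem finsum_mem_exp_pos {α : Type*} {s : Set α} (hs : s.Finite) (hne : s.Nonempty)
    (f : α → ℝ) : 0 < ∑ᶠ x ∈ s, exp (f x) :=
  finsum_cond_pos (fun _ _ => (exp_pos _).le)
    (hne.imp fun _ hx => ⟨hx, exp_pos _⟩) (hs.subset Set.inter_subset_right)

theorem atomic_clusters_weights_determine_equivalence_general {S 𝕃 : Type*} [DecidableEq 𝕃]
    (Φ Ψ : Finset 𝕃 → (𝕃 → S) → ℝ)
    (hΦloc : ∀ (A : Finset 𝕃) (σ τ : 𝕃 → S), Set.EqOn σ τ ↑A → Φ A σ = Φ A τ)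
    (hΨloc : ∀ (A : Finset 𝕃) (σ τ : 𝕃 → S), Set.EqOn σ τ ↑A → Ψ A σ = Ψ A τ)
    (hΦadm : ∀ (Λ : Finset 𝕃) (σ : 𝕃 → S),
      Summable (fun A : Finset 𝕃 => if (A ∩ Λ).Nonempty then Φ A σ else 0))
    (hΨadm : ∀ (Λ : Finset 𝕃) (σ : 𝕃 → S),
      Summable (fun A : Finset 𝕃 => if (A ∩ Λ).Nonempty then Ψ A σ else 0))
    (hweights : ∀ (ζ η : 𝕃 → S) (hfin : ({x : 𝕃 | ζ x ≠ η x}).Finite),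
      ∀ σ ∈ {ξ : 𝕃 → S | ∀ x : 𝕃, ξ x = ζ x ∨ ξ x = η x},
        Real.exp (-Ham Φ hfin.toFinset σ)
            / ∑ᶠ ξ ∈ {ξ : 𝕃 → S | ∀ x : 𝕃, ξ x = ζ x ∨ ξ x = η x},
                Real.exp (-Ham Φ hfin.toFinset ξ)
          = Real.exp (-Ham Ψ hfin.toFinset σ)
              / ∑ᶠ ξ ∈ {ξ : 𝕃 → S | ∀ x : 𝕃, ξ x = ζ x ∨ ξ x = η x},
                  Real.exp (-Ham Ψ hfin.toFinset ξ)) :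
    ∀ (Λ : Finset 𝕃) (σ τ : 𝕃 → S), Set.EqOn σ τ (↑Λ)ᶜ →
      Ham Φ Λ σ - Ham Ψ Λ σ = Ham Φ Λ τ - Ham Ψ Λ τ := by
  intro Λ σ τ hστ
  have hfin : {x | σ x ≠ τ x}.Finite :=
    Λ.finite_toSet.subset fun x hx => by_contra fun hxΛ => hx (hστ hxΛ)
  have hDΛ : hfin.toFinset ⊆ Λ := fun x hx =>
    by_contra fun hxΛ => hfin.mem_toFinset.1 hx (hστ hxΛ)
  have hoff : Set.EqOn σ τ (↑hfin.toFinset)ᶜ := fun x hx =>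
    not_not.1 fun h => hx (hfin.mem_toFinset.2 h)
  have hσ : σ ∈ {ξ : 𝕃 → S | ∀ x, ξ x = σ x ∨ ξ x = τ x} := fun _ => Or.inl rfl
  have hτ : τ ∈ {ξ : 𝕃 → S | ∀ x, ξ x = σ x ∨ ξ x = τ x} := fun _ => Or.inr rfl
  have hZ := finsum_mem_exp_pos hfin.setOf_forall_eq_or_eq ⟨σ, hσ⟩
  have hD : Ham Φ hfin.toFinset σ - Ham Ψ hfin.toFinset σ
      = Ham Φ hfin.toFinset τ - Ham Ψ hfin.toFinset τ := by
    rw [sub_eq_log_sub_log_of_exp_neg_div_eq (hZ _) (hZ _) (hweights σ τ hfin σ hσ),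
      sub_eq_log_sub_log_of_exp_neg_div_eq (hZ _) (hZ _) (hweights σ τ hfin τ hτ)]
  have hΦ := Ham_sub_Ham_eq_of_eqOn_compl hΦloc hΦadm hDΛ hoff
  have hΨ := Ham_sub_Ham_eq_of_eqOn_compl hΨloc hΨadm hDΛ hoff
  linarith

/-- Atomic clusters: if the normalized Boltzmann weights of two admissible
potentials Φ and Ψ agree on every offspring set (offspring mix the two parents
site by site), then H_Λ^Φ − H_Λ^Ψ depends only on the configuration outside Λ,
i.e. Φ and Ψ are equivalent potentials. -/
theorem atomic_clusters_weights_determine_equivalence {S 𝕃 : Type*} [Finite S]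
    [Countable 𝕃] [DecidableEq 𝕃]
    (Φ Ψ : Finset 𝕃 → (𝕃 → S) → ℝ)
    (hΦloc : ∀ (A : Finset 𝕃) (σ τ : 𝕃 → S), Set.EqOn σ τ ↑A → Φ A σ = Φ A τ)
    (hΨloc : ∀ (A : Finset 𝕃) (σ τ : 𝕃 → S), Set.EqOn σ τ ↑A → Ψ A σ = Ψ A τ)
    (hΦadm : ∀ (Λ : Finset 𝕃) (σ : 𝕃 → S),
      Summable (fun A : Finset 𝕃 => if (A ∩ Λ).Nonempty then Φ A σ else 0))
    (hΨadm : ∀ (Λ : Finset 𝕃) (σ : 𝕃 → S),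
      Summable (fun A : Finset 𝕃 => if (A ∩ Λ).Nonempty then Ψ A σ else 0))
    (hweights : ∀ (ζ η : 𝕃 → S) (hfin : ({x : 𝕃 | ζ x ≠ η x}).Finite),
      ∀ σ ∈ {ξ : 𝕃 → S | ∀ x : 𝕃, ξ x = ζ x ∨ ξ x = η x},
        Real.exp (-Ham Φ hfin.toFinset σ)
            / ∑ᶠ ξ ∈ {ξ : 𝕃 → S | ∀ x : 𝕃, ξ x = ζ x ∨ ξ x = η x},
                Real.exp (-Ham Φ hfin.toFinset ξ)
          = Real.exp (-Ham Ψ hfin.toFinset σ)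
              / ∑ᶠ ξ ∈ {ξ : 𝕃 → S | ∀ x : 𝕃, ξ x = ζ x ∨ ξ x = η x},
                  Real.exp (-Ham Ψ hfin.toFinset ξ)) :
    ∀ (Λ : Finset 𝕃) (σ τ : 𝕃 → S), Set.EqOn σ τ (↑Λ)ᶜ →
      Ham Φ Λ σ - Ham Ψ Λ σ = Ham Φ Λ τ - Ham Ψ Λ τ :=
  atomic_clusters_weights_determine_equivalence_general Φ Ψ hΦloc hΨloc hΦadm hΨadm hweights
end
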